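/- Let φ be a 3-CNF formula over variables x₁,…,x_k with clauses C₁,…,C_n, and define F : ({0,1})^k → ℝ by F(x) = ∑_{i=1}^n (1 − max(0, 1 − (ℓ_{i,1}(x) + ℓ_{i,2}(x) + ℓ_{i,3}(x)))), where each literal ℓ_{i,j}(x) is either x_m or 1 − x_m. Then F(x) = n if and only if the Boolean assignment corresponding to x satisfies φ; consequently, the number of satisfying assignments of φ equals |{x ∈ {0,1}^k : F(x) = n}|. -/

import Mathlib

/-- The `0/1` real encoding of a Boolean. -/
def boolToReal (b : Bool) : ℝ := if b then 1 else 0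

/-- Real value of a literal `(m, neg)` (variable `x_m`, negated iff `neg`) under the
`0/1` encoding of a Boolean assignment `x`. -/
def litVal {k : ℕ} (x : Fin k → Bool) (l : Fin k × Bool) : ℝ :=
  if l.2 then 1 - boolToReal (x l.1) else boolToReal (x l.1)

/-- ReLU-network encoding of a 3-CNF formula with clauses given by `lit`: sum over clauses
of the disjunction gadget applied to the three literal values. -/
def cnfNet {k n : ℕ} (lit : Fin n → Fin 3 → Fin k × Bool) (x : Fin k → Bool) : ℝ :=
  ∑ i : Fin n,
    (1 - max 0 (1 - (litVal x (lit i 0) + litVal x (lit i 1) + litVal x (lit i 2))))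

/-- Truth of a literal `(m, neg)` under a Boolean assignment `x`. -/
def litTrue {k : ℕ} (x : Fin k → Bool) (l : Fin k × Bool) : Prop :=
  if l.2 then x l.1 = false else x l.1 = true

/- The disjunction gadget `1 - ReLU(1 - s)` computes `min 1 s`. On a Boolean input the literal
values are `0/1`, so a clause's gadget outputs `1` when some literal is true and `0` otherwise;
as every summand is at most `1`, the sum reaches `n` exactly when every clause is satisfied. -/

theorem sub_max_zero_sub {α : Type*} [AddCommGroup α] [LinearOrder α] [IsOrderedAddMonoid α]
    (a s : α) : a - max 0 (a - s) = min a s := by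
  rw [← min_sub_sub_left, sub_zero, sub_sub_cancel]

theorem one_le_sum_iff_exists_eq_one {ι : Type*} [Fintype ι] {v : ι → ℝ}
    (hv : ∀ j, v j = 0 ∨ v j = 1) : 1 ≤ ∑ j, v j ↔ ∃ j, v j = 1 := by
  have hv_nonneg : ∀ j, 0 ≤ v j := fun j => by rcases hv j with h | h <;> simp [h]
  constructor
  · intro hsum
    by_contra! hne
    have hzero : ∀ j, v j = 0 := fun j => (hv j).resolve_right (hne j)
    simp only [hzero, Finset.sum_const_zero] at hsum
    linarith
  · rintro ⟨j, hj⟩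
    exact hj ▸ Finset.single_le_sum (fun i _ => hv_nonneg i) (Finset.mem_univ j)

theorem litVal_eq_zero_or_one {k : ℕ} (x : Fin k → Bool) (l : Fin k × Bool) :
    litVal x l = 0 ∨ litVal x l = 1 := by
  rcases l with ⟨m, _ | _⟩ <;> cases h : x m <;> simp [litVal, boolToReal, h]

theorem litVal_eq_one_iff {k : ℕ} (x : Fin k → Bool) (l : Fin k × Bool) :
    litVal x l = 1 ↔ litTrue x l := by
  rcases l with ⟨m, _ | _⟩ <;> cases h : x m <;> simp [litVal, litTrue, boolToReal, h]

theorem cnfNet_eq_sum_min {k n : ℕ} (lit : Fin n → Fin 3 → Fin k × Bool) (x : Fin k → Bool) :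
    cnfNet lit x = ∑ i, min 1 (∑ j, litVal x (lit i j)) := by
  simp only [cnfNet, sub_max_zero_sub, Fin.sum_univ_three]

theorem min_one_sum_litVal_eq_one_iff {k : ℕ} (x : Fin k → Bool) (c : Fin 3 → Fin k × Bool) :
    min 1 (∑ j, litVal x (c j)) = 1 ↔ ∃ j, litTrue x (c j) := by
  rw [min_eq_left_iff, one_le_sum_iff_exists_eq_one fun j => litVal_eq_zero_or_one x (c j)]
  simp only [litVal_eq_one_iff]

theorem cnfNet_eq_iff_satisfies {k n : ℕ} (lit : Fin n → Fin 3 → Fin k × Bool)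
    (x : Fin k → Bool) :
    cnfNet lit x = n ↔ ∀ i, ∃ j, litTrue x (lit i j) := by
  have hn : (n : ℝ) = ∑ _i : Fin n, 1 := by simp
  rw [cnfNet_eq_sum_min, hn,
    Finset.sum_eq_sum_iff_of_le fun i _ => min_le_left 1 (∑ j, litVal x (lit i j))]
  simp only [Finset.mem_univ, true_implies, min_one_sum_litVal_eq_one_iff]

/-- Parsimonious reduction from #3SAT: the network outputs `n` exactly on the satisfying
assignments of the 3-CNF formula, so the counts coincide. -/
theorem stmt_16 (k n : ℕ) (lit : Fin n → Fin 3 → Fin k × Bool) :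
    (∀ x : Fin k → Bool,
        cnfNet lit x = (n : ℝ) ↔ ∀ i : Fin n, ∃ j : Fin 3, litTrue x (lit i j)) ∧
      Nat.card {x : Fin k → Bool // ∀ i : Fin n, ∃ j : Fin 3, litTrue x (lit i j)}
        = Nat.card {x : Fin k → Bool // cnfNet lit x = (n : ℝ)} :=
  ⟨cnfNet_eq_iff_satisfies lit,
    Nat.card_congr (Equiv.subtypeEquivRight fun x => (cnfNet_eq_iff_satisfies lit x).symm)⟩
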